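/- arXiv:1210.8326 — 2 statements merged into one kernel-verified Lean document; each statement's English description precedes it below -/
import Mathlib

section
/- Let M be even, let s_1 < s_2 < ... < s_M be real numbers, let ρ > 0, let p ∈ {0,1}^M be a pattern of Hamming weight M/2, and let β_1 ≤ β_2 ≤ ... ≤ β_{M-1} be arbitrary real thresholds (not necessarily the midpoints between consecutive constellation points), with β_0 = -∞ and β_M = +∞. Let Y = s_i + η where η is a zero-mean Gaussian random variable with variance 1/(2ρ), and let the demodulator output the bit p_k when β_{k-1} < Y ≤ β_k. Then (1/M) ∑_{i=1}^{M} Pr{output bit ≠ p_i | transmitted point is s_i} = 1/2 + (1/M) ∑_{i=1}^{M} ∑_{k=1}^{M-1} g_{i,k} · Q((β_k − s_i)·√(2ρ)), where g_{i,k} = (p_{k+1} − p_k)(1 − 2 p_i) with bits treated as integers. -/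
open MeasureTheory

/-- The Gaussian Q-function `Q(x) = (1/√(2π)) ∫_x^∞ e^{-t²/2} dt`. -/
noncomputable def Qfun (x : ℝ) : ℝ :=
  ∫ t in Set.Ioi x, (Real.sqrt (2 * Real.pi))⁻¹ * Real.exp (-t ^ 2 / 2)

/-- The Gaussian density with mean `μ` and variance `1/(2ρ)`
(the AWGN channel transition density at SNR `ρ`). -/
noncomputable def gaussDens (ρ μ y : ℝ) : ℝ :=
  Real.sqrt (ρ / Real.pi) * Real.exp (-ρ * (y - μ) ^ 2)

/-- The `k`-th decision region (for `k = 1, …, M`) of a threshold demodulator with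
thresholds `β 1 ≤ … ≤ β (M-1)`, together with `β 0 = -∞` and `β M = +∞`:
region `k` is `(β (k-1), β k]`. -/
def region (β : ℕ → ℝ) (M k : ℕ) : Set ℝ :=
  if k = 1 then Set.Iic (β 1)
  else if k = M then Set.Ioi (β (M - 1))
  else Set.Ioc (β (k - 1)) (β k)

/-- A bit viewed as a real number. -/
def bitR (b : Bool) : ℝ := if b then 1 else 0

/-!
Each decision region is an interval, so the probability that `Y` lands in region `k` is the
difference `T (k-1) - T k` of consecutive Gaussian tails `T k = Q((β k - s i)√(2ρ))`, with
`T 0 = 1` and `T M = 0`. Summation by parts in `k` replaces the error indicator `[p k ≠ p i]`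
by its increments, which are `(p (k+1) - p k)(1 - 2 p i)`, and leaves the boundary term
`[p 1 ≠ p i]`; since the pattern is balanced, that term averages to `1/2` over `i`.
-/

open Real Finset

noncomputable def stdNormalDens (t : ℝ) : ℝ := (√(2 * π))⁻¹ * exp (-t ^ 2 / 2)

lemma Qfun_eq_setIntegral_stdNormalDens (x : ℝ) : Qfun x = ∫ t in Set.Ioi x, stdNormalDens t := rfl

lemma setIntegral_Ioi_comp_add_right {E : Type*} [NormedAddCommGroup E] [NormedSpace ℝ E]
    (g : ℝ → E) (a d : ℝ) : ∫ x in Set.Ioi a, g (x + d) = ∫ x in Set.Ioi (a + d), g x := by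
  have h := (measurePreserving_add_right volume d).setIntegral_preimage_emb
    (measurableEmbedding_addRight d) g (Set.Ioi (a + d))
  rwa [Set.preimage_add_const_Ioi, add_sub_cancel_right] at h

section Gaussian

open Set

variable {ρ : ℝ} (μ : ℝ)

lemma gaussDens_eq_mul_stdNormalDens (hρ : 0 < ρ) (y : ℝ) :
    gaussDens ρ μ y = √(2 * ρ) * stdNormalDens ((y - μ) * √(2 * ρ)) := by
  have hexp : -((y - μ) * √(2 * ρ)) ^ 2 / 2 = -ρ * (y - μ) ^ 2 := by
    rw [mul_pow, sq_sqrt (by positivity)]; ring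
  have hconst : √(ρ / π) = √(2 * ρ) * (√(2 * π))⁻¹ := by
    rw [← sqrt_inv, ← sqrt_mul (by positivity)]
    congr 1
    field_simp [pi_pos.ne']
  rw [gaussDens, stdNormalDens, hexp, hconst, mul_assoc]

lemma integrable_gaussDens (hρ : 0 < ρ) : Integrable (gaussDens ρ μ) :=
  ((integrable_exp_neg_mul_sq hρ).comp_sub_right μ).const_mul _

lemma integral_gaussDens (hρ : 0 < ρ) : ∫ y, gaussDens ρ μ y = 1 := by
  rw [show gaussDens ρ μ = fun y => √(ρ / π) * exp (-ρ * (y - μ) ^ 2) from rfl,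
    integral_const_mul, integral_sub_right_eq_self (fun y => exp (-ρ * y ^ 2)) μ,
    integral_gaussian, ← sqrt_mul (by positivity),
    show ρ / π * (π / ρ) = 1 by field_simp [pi_pos.ne'], sqrt_one]

lemma setIntegral_Ioi_gaussDens (hρ : 0 < ρ) (a : ℝ) :
    ∫ y in Ioi a, gaussDens ρ μ y = Qfun ((a - μ) * √(2 * ρ)) := by
  have hc : 0 < √(2 * ρ) := sqrt_pos.mpr (by positivity)
  calc ∫ y in Ioi a, gaussDens ρ μ y
      = √(2 * ρ) * ∫ y in Ioi a, stdNormalDens ((y + -μ) * √(2 * ρ)) := by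
        simp_rw [gaussDens_eq_mul_stdNormalDens _ hρ, sub_eq_add_neg]
        exact integral_const_mul _ _
    _ = √(2 * ρ) * ∫ x in Ioi (a + -μ), stdNormalDens (x * √(2 * ρ)) := by
        rw [setIntegral_Ioi_comp_add_right (fun x => stdNormalDens (x * √(2 * ρ)))]
    _ = Qfun ((a - μ) * √(2 * ρ)) := by
        rw [integral_comp_mul_right_Ioi _ _ hc, smul_eq_mul, ← mul_assoc,
          mul_inv_cancel₀ hc.ne', one_mul, sub_eq_add_neg, Qfun_eq_setIntegral_stdNormalDens]

lemma setIntegral_Iic_gaussDens (hρ : 0 < ρ) (a : ℝ) :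
    ∫ y in Iic a, gaussDens ρ μ y = 1 - Qfun ((a - μ) * √(2 * ρ)) := by
  have h := integral_add_compl measurableSet_Iic (integrable_gaussDens μ hρ) (s := Iic a)
  rw [compl_Iic, setIntegral_Ioi_gaussDens _ hρ, integral_gaussDens μ hρ] at h
  linarith

lemma setIntegral_Ioc_gaussDens (hρ : 0 < ρ) {a b : ℝ} (hab : a ≤ b) :
    ∫ y in Ioc a b, gaussDens ρ μ y
      = Qfun ((a - μ) * √(2 * ρ)) - Qfun ((b - μ) * √(2 * ρ)) := by
  have h := setIntegral_union (Ioc_disjoint_Ioi_same (a := a) (b := b)) measurableSet_Ioi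
    (integrable_gaussDens μ hρ).integrableOn (integrable_gaussDens μ hρ).integrableOn
  rw [Ioc_union_Ioi_eq_Ioi hab, setIntegral_Ioi_gaussDens _ hρ, setIntegral_Ioi_gaussDens _ hρ] at h
  linarith

end Gaussian

lemma Finset.sum_Icc_mul_pred_sub {R : Type*} [CommRing R] (e A : ℕ → R) (n : ℕ) :
    ∑ k ∈ Icc 1 (n + 1), e k * (A (k - 1) - A k)
      = e 1 * A 0 - e (n + 1) * A (n + 1) + ∑ k ∈ Icc 1 n, (e (k + 1) - e k) * A k := by
  induction n with
  | zero => simp [mul_sub]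
  | succ n ih =>
    rw [sum_Icc_succ_top (by omega), ih, sum_Icc_succ_top (by omega), Nat.add_sub_cancel]
    ring

/-- `P(Y > β k)` for `Y` of density `gaussDens ρ μ`, with the conventions `β 0 = -∞` and
`β M = +∞`. -/
noncomputable def tailProb (ρ μ : ℝ) (β : ℕ → ℝ) (M k : ℕ) : ℝ :=
  if k = 0 then 1 else if M ≤ k then 0 else Qfun ((β k - μ) * √(2 * ρ))

lemma tailProb_zero {ρ μ : ℝ} {β : ℕ → ℝ} {M : ℕ} : tailProb ρ μ β M 0 = 1 := rfl

lemma tailProb_self {ρ μ : ℝ} {β : ℕ → ℝ} {M : ℕ} (hM : M ≠ 0) : tailProb ρ μ β M M = 0 := by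
  rw [tailProb, if_neg hM, if_pos le_rfl]

lemma tailProb_of_mem_Icc {ρ μ : ℝ} {β : ℕ → ℝ} {M k : ℕ} (hk : k ∈ Icc 1 (M - 1)) :
    tailProb ρ μ β M k = Qfun ((β k - μ) * √(2 * ρ)) := by
  rw [mem_Icc] at hk
  rw [tailProb, if_neg (by omega), if_neg (by omega)]

lemma setIntegral_region_gaussDens {ρ : ℝ} (hρ : 0 < ρ) (μ : ℝ) {M : ℕ} (hM : 2 ≤ M)
    {β : ℕ → ℝ} (hβ : ∀ k ∈ Icc 1 (M - 2), β k ≤ β (k + 1)) {k : ℕ} (hk : k ∈ Icc 1 M) :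
    ∫ y in region β M k, gaussDens ρ μ y = tailProb ρ μ β M (k - 1) - tailProb ρ μ β M k := by
  rw [mem_Icc] at hk
  unfold region
  split_ifs with h1 hkM
  · subst h1
    rw [setIntegral_Iic_gaussDens _ hρ, tailProb_zero, tailProb_of_mem_Icc (mem_Icc.mpr ⟨le_rfl, by omega⟩)]
  · subst hkM
    rw [setIntegral_Ioi_gaussDens _ hρ, tailProb_self (by omega),
      tailProb_of_mem_Icc (mem_Icc.mpr ⟨by omega, le_rfl⟩), sub_zero]
  · have hle : β (k - 1) ≤ β k := by
      simpa [Nat.sub_add_cancel hk.1] using hβ (k - 1) (mem_Icc.mpr ⟨by omega, by omega⟩)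
    rw [setIntegral_Ioc_gaussDens _ hρ hle, tailProb_of_mem_Icc (mem_Icc.mpr ⟨by omega, by omega⟩),
      tailProb_of_mem_Icc (mem_Icc.mpr ⟨by omega, by omega⟩)]

lemma ite_ne_sub_ite_ne (a b c : Bool) :
    ((if a ≠ c then 1 else 0) - (if b ≠ c then 1 else 0) : ℝ)
      = (bitR a - bitR b) * (1 - 2 * bitR c) := by
  cases a <;> cases b <;> cases c <;> norm_num [bitR]

lemma sum_ite_ne_setIntegral_region {ρ : ℝ} (hρ : 0 < ρ) (μ : ℝ) {M : ℕ} (hM : 2 ≤ M)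
    {β : ℕ → ℝ} (hβ : ∀ k ∈ Icc 1 (M - 2), β k ≤ β (k + 1)) (p : ℕ → Bool) (b : Bool) :
    ∑ k ∈ Icc 1 M, (if p k ≠ b then ∫ y in region β M k, gaussDens ρ μ y else 0)
      = (if p 1 ≠ b then 1 else 0) + ∑ k ∈ Icc 1 (M - 1),
          (bitR (p (k + 1)) - bitR (p k)) * (1 - 2 * bitR b) * Qfun ((β k - μ) * √(2 * ρ)) := by
  obtain ⟨n, rfl⟩ : ∃ n, M = n + 1 := ⟨M - 1, by omega⟩
  have hsum := Finset.sum_Icc_mul_pred_sub (fun k => if p k ≠ b then (1 : ℝ) else 0)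
    (tailProb ρ μ β (n + 1)) n
  simp only [ite_mul, one_mul, zero_mul, ite_ne_sub_ite_ne] at hsum
  rw [sum_congr rfl fun k hk => by rw [setIntegral_region_gaussDens hρ μ hM hβ hk], hsum]
  rw [tailProb_zero, tailProb_self n.succ_ne_zero, ite_self, sub_zero, Nat.add_sub_cancel]
  refine congrArg _ (sum_congr rfl fun k hk => ?_)
  rw [tailProb_of_mem_Icc (by simpa using hk)]

lemma two_mul_card_filter_ne {ι : Type*} (S : Finset ι) (p : ι → Bool)
    (hp : 2 * #(S.filter fun i => p i = true) = #S) (b : Bool) :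
    2 * #(S.filter fun i => b ≠ p i) = #S := by
  have hsplit := card_filter_add_card_filter_not (s := S) (p := fun i => p i = true)
  cases b
  · rwa [filter_congr fun i _ => show false ≠ p i ↔ p i = true by cases p i <;> simp]
  · rw [filter_congr fun i _ => show true ≠ p i ↔ ¬ p i = true by cases p i <;> simp]
    omega

theorem pattern_ber_general_thresholds_general (M : ℕ) (hM : Even M) (hM0 : 0 < M)
    (s : ℕ → ℝ)
    (ρ : ℝ) (hρ : 0 < ρ)
    (p : ℕ → Bool)
    (hp : ((Finset.Icc 1 M).filter (fun i => p i = true)).card = M / 2)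
    (β : ℕ → ℝ) (hβ : ∀ k ∈ Finset.Icc 1 (M - 2), β k ≤ β (k + 1)) :
    (M : ℝ)⁻¹ * ∑ i ∈ Finset.Icc 1 M, ∑ k ∈ Finset.Icc 1 M,
        (if p k ≠ p i then ∫ y in region β M k, gaussDens ρ (s i) y else 0)
      = 1 / 2 + (M : ℝ)⁻¹ * ∑ i ∈ Finset.Icc 1 M, ∑ k ∈ Finset.Icc 1 (M - 1),
          (bitR (p (k + 1)) - bitR (p k)) * (1 - 2 * bitR (p i)) *
            Qfun ((β k - s i) * Real.sqrt (2 * ρ)) := by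
  have hM2 : 2 ≤ M := by rcases hM with ⟨m, rfl⟩; omega
  have hflips : (2 * #((Icc 1 M).filter fun i => p 1 ≠ p i) : ℝ) = M := by
    have hbalanced : 2 * #((Icc 1 M).filter fun i => p i = true) = #(Icc 1 M) := by
      rw [hp, Nat.card_Icc]; rcases hM with ⟨m, rfl⟩; omega
    exact_mod_cast (Nat.card_Icc 1 M ▸ two_mul_card_filter_ne _ p hbalanced (p 1) : _)
  simp_rw [sum_ite_ne_setIntegral_region hρ _ hM2 hβ p, sum_add_distrib, sum_boole]
  have hhalf : (M : ℝ)⁻¹ * #((Icc 1 M).filter fun i => p 1 ≠ p i) = 1 / 2 := by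
    field_simp
    linarith
  rw [mul_add, hhalf]

theorem pattern_ber_general_thresholds (M : ℕ) (hM : Even M) (hM0 : 0 < M)
    (s : ℕ → ℝ) (hs : ∀ k ∈ Finset.Icc 1 (M - 1), s k < s (k + 1))
    (ρ : ℝ) (hρ : 0 < ρ)
    (p : ℕ → Bool)
    (hp : ((Finset.Icc 1 M).filter (fun i => p i = true)).card = M / 2)
    (β : ℕ → ℝ) (hβ : ∀ k ∈ Finset.Icc 1 (M - 2), β k ≤ β (k + 1)) :
    (M : ℝ)⁻¹ * ∑ i ∈ Finset.Icc 1 M, ∑ k ∈ Finset.Icc 1 M,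
        (if p k ≠ p i then ∫ y in region β M k, gaussDens ρ (s i) y else 0)
      = 1 / 2 + (M : ℝ)⁻¹ * ∑ i ∈ Finset.Icc 1 M, ∑ k ∈ Finset.Icc 1 (M - 1),
          (bitR (p (k + 1)) - bitR (p k)) * (1 - 2 * bitR (p i)) *
            Qfun ((β k - s i) * Real.sqrt (2 * ρ)) :=
  pattern_ber_general_thresholds_general M hM hM0 s ρ hρ p hp β hβ
end

section
/- Let M be even. For a pattern p ∈ {0,1}^M of Hamming weight M/2, let T(p) = |{k ∈ {1,...,M−1} : p_k ≠ p_{k+1}}| be its number of adjacent bit transitions. Then the set of values {T(p) : p a pattern of length M with Hamming weight M/2} equals {1, 2, ..., M−1}; in particular, there are exactly M−1 distinct possible values of the leading coefficient a_1 = 2·T(p), so all pattern BER curves merge into M−1 groups at high SNR. -/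
/-!
A pattern with no transition is constant, so its weight is `0` or `M`; hence a balanced pattern
has at least one transition, and trivially at most `M - 1`. Conversely, for `1 ≤ t ≤ M - 1` the
pattern that alternates `1, 0, 1, …` on positions `1, …, t`, then repeats `p t` up to position
`j = M / 2 + t / 2` and its complement after that, has exactly `t` transitions (at `1, …, t - 1`
and at `j`) and weight `M / 2`.
-/

open Finset

def weight (p : ℕ → Bool) (n : ℕ) : ℕ := #{i ∈ Icc 1 n | p i = true}

def transitions (p : ℕ → Bool) (n : ℕ) : ℕ := #{k ∈ Icc 1 (n - 1) | p k ≠ p (k + 1)}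

lemma card_filter_odd_Icc_one (n : ℕ) : #{i ∈ Icc 1 n | i % 2 = 1} = (n + 1) / 2 := by
  induction n with
  | zero => simp
  | succ n ih =>
    rw [← insert_Icc_right_eq_Icc_add_one (by omega), filter_insert]
    split_ifs with h
    · rw [card_insert_of_notMem (by simp), ih]; omega
    · rw [ih]; omega

section Bounds

variable {p : ℕ → Bool} {n : ℕ}

lemma transitions_le : transitions p n ≤ n - 1 :=
  (card_filter_le _ _).trans (by simp)

lemma eq_of_transitions_eq_zero (h : transitions p n = 0) {i : ℕ} (hi : 1 ≤ i) (hin : i ≤ n) :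
    p i = p 1 := by
  induction i, hi using Nat.le_induction with
  | base => rfl
  | succ i hi ih =>
    have hstep : p i = p (i + 1) :=
      not_not.mp (filter_eq_empty_iff.mp (card_eq_zero.mp h) (mem_Icc.mpr ⟨hi, by omega⟩))
    rw [← hstep, ih (by omega)]

lemma weight_eq_zero_or_eq_of_transitions_eq_zero (h : transitions p n = 0) :
    weight p n = 0 ∨ weight p n = n := by
  have hconst (i) (hi : i ∈ Icc 1 n) : p i = p 1 :=
    eq_of_transitions_eq_zero h (mem_Icc.mp hi).1 (mem_Icc.mp hi).2
  cases hp : p 1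
  · left
    exact card_eq_zero.mpr (filter_false_of_mem fun i hi => by simp [hconst i hi, hp])
  · right
    rw [weight, filter_true_of_mem fun i hi => by rw [hconst i hi, hp], Nat.card_Icc,
      Nat.add_sub_cancel]

lemma one_le_transitions (h0 : weight p n ≠ 0) (hn : weight p n ≠ n) : 1 ≤ transitions p n := by
  by_contra! h
  rcases weight_eq_zero_or_eq_of_transitions_eq_zero (Nat.lt_one_iff.mp h) with h' | h' <;>
    contradiction

end Bounds

def alternatingPattern (t j i : ℕ) : Bool := decide (min i t % 2 = 1 ↔ i ≤ j)

section AlternatingPattern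

variable {t j n : ℕ}

lemma alternatingPattern_ne_succ_iff (htj : t ≤ j) (k : ℕ) :
    alternatingPattern t j k ≠ alternatingPattern t j (k + 1) ↔ k < t ∨ k = j := by
  rw [ne_eq, Bool.eq_iff_iff]
  simp only [alternatingPattern, decide_eq_true_eq]
  omega

lemma transitions_alternatingPattern (ht : 1 ≤ t) (htj : t ≤ j) (hjn : j < n) :
    transitions (alternatingPattern t j) n = t := by
  have hset : {k ∈ Icc 1 (n - 1) | alternatingPattern t j k ≠ alternatingPattern t j (k + 1)}
      = insert j (Ico 1 t) := by
    ext k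
    rw [mem_filter, alternatingPattern_ne_succ_iff htj, mem_Icc, mem_insert, mem_Ico]
    omega
  rw [transitions, hset, card_insert_of_notMem (by simp [htj]), Nat.card_Ico]
  omega

lemma card_filter_odd_Icc_one_union_Ioc {a b : ℕ} (hta : t ≤ a) :
    #({i ∈ Icc 1 t | i % 2 = 1} ∪ Ioc a b) = (t + 1) / 2 + (b - a) := by
  rw [card_union_of_disjoint, card_filter_odd_Icc_one, Nat.card_Ioc]
  exact disjoint_left.mpr fun i hi hi' => by
    simp only [mem_filter, mem_Icc, mem_Ioc] at hi hi'
    omega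

lemma weight_alternatingPattern (htj : t ≤ j) (hjn : j ≤ n) :
    weight (alternatingPattern t j) n = (t + 1) / 2 + if t % 2 = 1 then j - t else n - j := by
  rw [weight]
  split_ifs with ht
  · have hset : {i ∈ Icc 1 n | alternatingPattern t j i = true}
        = {i ∈ Icc 1 t | i % 2 = 1} ∪ Ioc t j := by
      ext i
      simp only [alternatingPattern, decide_eq_true_eq, mem_filter, mem_union, mem_Icc, mem_Ioc]
      omega
    rw [hset, card_filter_odd_Icc_one_union_Ioc le_rfl]
  · have hset : {i ∈ Icc 1 n | alternatingPattern t j i = true}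
        = {i ∈ Icc 1 t | i % 2 = 1} ∪ Ioc j n := by
      ext i
      simp only [alternatingPattern, decide_eq_true_eq, mem_filter, mem_union, mem_Icc, mem_Ioc]
      omega
    rw [hset, card_filter_odd_Icc_one_union_Ioc htj]

end AlternatingPattern

theorem transition_counts_range (M : ℕ) (hM : Even M) (hM0 : 0 < M) :
    {t : ℕ | ∃ p : ℕ → Bool,
        ((Finset.Icc 1 M).filter (fun i => p i = true)).card = M / 2 ∧
        t = ((Finset.Icc 1 (M - 1)).filter (fun k => p k ≠ p (k + 1))).card}
      = Set.Icc 1 (M - 1) := by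
  obtain ⟨m, rfl⟩ := hM
  ext t
  constructor
  · rintro ⟨p, hw, rfl⟩
    change weight p (m + m) = (m + m) / 2 at hw
    exact ⟨one_le_transitions (by omega) (by omega), transitions_le⟩
  · rintro ⟨ht1, ht⟩
    have hj : t ≤ m + t / 2 ∧ m + t / 2 < m + m := by omega
    refine ⟨alternatingPattern t (m + t / 2), ?_,
      (transitions_alternatingPattern ht1 hj.1 hj.2).symm⟩
    change weight _ _ = _
    rw [weight_alternatingPattern hj.1 hj.2.le]
    split_ifs <;> omega
end
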